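/- Assume S(x) \asymp \sqrt{x/\log x}. Then E(x) := S(x)^2 - M(x) satisfies E(x) \asymp \pi(x) as x \to \infty. -/
import Mathlib

open Filter

noncomputable def primesUpTo (x : ℝ) : Finset ℕ :=
  (Finset.range (⌊x⌋₊ + 1)).filter Nat.Prime

noncomputable def S (x : ℝ) : ℝ := ∑ p ∈ primesUpTo x, Real.sqrt (Real.log p / p)

noncomputable def M (x : ℝ) : ℝ := ∑ p ∈ primesUpTo x, Real.log p / p

lemma mem_primesUpTo_iff {x : ℝ} (hx : 0 ≤ x) {p : ℕ} :
    p ∈ primesUpTo x ↔ p.Prime ∧ (p : ℝ) ≤ x := by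
  simp only [primesUpTo, Finset.mem_filter, Finset.mem_range, Nat.lt_succ_iff]
  rw [Nat.le_floor_iff hx]
  tauto

lemma primesUpTo_card (x : ℝ) : (Nat.primeCounting ⌊x⌋₊ : ℕ) = (primesUpTo x).card := by
  rw [primesUpTo, Nat.primeCounting, Nat.primeCounting', Nat.count_eq_card_filter_range]

lemma primesUpTo_mono {x y : ℝ} (h : y ≤ x) : primesUpTo y ⊆ primesUpTo x := by
  apply Finset.filter_subset_filter
  apply Finset.range_subset_range.2
  exact Nat.succ_le_succ (Nat.floor_mono h)

lemma prime_of_mem {x : ℝ} {p : ℕ} (hp : p ∈ primesUpTo x) : p.Prime :=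
  (Finset.mem_filter.1 hp).2

lemma le_of_mem {x : ℝ} {p : ℕ} (hx : 0 ≤ x) (hp : p ∈ primesUpTo x) : (p : ℝ) ≤ x := by
  have := (Finset.mem_filter.1 hp).1
  rw [Finset.mem_range, Nat.lt_succ_iff, Nat.le_floor_iff hx] at this
  exact this

lemma gt_of_notMem {x : ℝ} {p : ℕ} (hx : 0 ≤ x) (hp : p.Prime)
    (h : p ∉ primesUpTo x) : x < (p : ℝ) := by
  by_contra hc
  exact h ((mem_primesUpTo_iff hx).2 ⟨hp, le_of_not_gt hc⟩)

-- per-prime: log x / x ≤ log p / p for primes p ≤ x, x ≥ 8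
lemma logdiv_le {x : ℝ} (hx : 8 ≤ x) {p : ℕ} (hp : p.Prime) (hpx : (p : ℝ) ≤ x) :
    Real.log x / x ≤ Real.log (p : ℝ) / (p : ℝ) := by
  have he : Real.exp 1 < 2.7182818286 := Real.exp_one_lt_d9
  have hex : Real.exp 1 ≤ x := by linarith
  rcases le_or_gt 3 p with h3 | h3
  · have hep : Real.exp 1 ≤ (p : ℝ) := by
      have : (3 : ℝ) ≤ (p : ℝ) := by exact_mod_cast h3
      linarith
    exact Real.log_div_self_antitoneOn hep hex (by exact_mod_cast hpx : (p:ℝ) ≤ x)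
  · have hp2 : p = 2 := by
      have := hp.two_le; omega
    subst hp2
    have h8 : Real.log x / x ≤ Real.log 8 / 8 :=
      Real.log_div_self_antitoneOn (by norm_num; linarith) hex hx
    have h82 : Real.log (8:ℝ) = 3 * Real.log 2 := by
      rw [show (8:ℝ) = 2 ^ 3 by norm_num, Real.log_pow]; push_cast; ring
    have hl2 : 0 ≤ Real.log 2 := Real.log_nonneg (by norm_num)
    push_cast
    rw [h82] at h8
    linarith

-- growth: eventually √x * (log x)^2 ≤ a * x
lemma eventually_sqrt_log_sq_le {a : ℝ} (ha : 0 < a) :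
    ∀ᶠ x : ℝ in atTop, Real.sqrt x * (Real.log x) ^ 2 ≤ a * x := by
  filter_upwards [eventually_ge_atTop ((max 1 (64 / a)) ^ 4)] with x hx
  set B := max 1 (64 / a) with hB
  have hB1 : 1 ≤ B := le_max_left _ _
  have hB0 : 0 ≤ B := by linarith
  have hx1 : 1 ≤ x := le_trans (one_le_pow₀ hB1) hx
  have hx0 : 0 ≤ x := by linarith
  set u := Real.sqrt (Real.sqrt (Real.sqrt x)) with hu
  have h1 : Real.sqrt (Real.sqrt x) = u ^ 2 := (Real.sq_sqrt (Real.sqrt_nonneg _)).symm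
  have h2 : Real.sqrt x = u ^ 4 := by
    have := Real.sq_sqrt (Real.sqrt_nonneg x)
    rw [h1] at this; rw [← this]; ring
  have h3 : x = u ^ 8 := by
    have := Real.sq_sqrt hx0
    rw [h2] at this; rw [← this]; ring
  have hu1 : 1 ≤ u := by
    rw [hu]
    have : (1:ℝ) ≤ Real.sqrt x := Real.one_le_sqrt.2 hx1
    have : (1:ℝ) ≤ Real.sqrt (Real.sqrt x) := Real.one_le_sqrt.2 this
    exact Real.one_le_sqrt.2 this
  have hlog : Real.log x ≤ 8 * u := by
    have e1 : Real.log x = 8 * Real.log u := by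
      rw [hu, Real.log_sqrt (Real.sqrt_nonneg _), Real.log_sqrt (Real.sqrt_nonneg _),
        Real.log_sqrt hx0]
      ring
    have := Real.log_le_sub_one_of_pos (by linarith : (0:ℝ) < u)
    linarith
  have hlog0 : 0 ≤ Real.log x := Real.log_nonneg hx1
  -- u^2 ≥ 64/a
  have hu2 : 64 / a ≤ u ^ 2 := by
    have hx' : B ^ 4 ≤ u ^ 8 := by rw [← h3]; exact hx
    have : B ≤ u ^ 2 := by
      apply le_of_pow_le_pow_left₀ (by norm_num : (4:ℕ) ≠ 0) (sq_nonneg u)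
      calc B ^ 4 ≤ u ^ 8 := hx'
        _ = (u ^ 2) ^ 4 := by ring
    exact le_trans (le_max_right _ _) this
  calc Real.sqrt x * Real.log x ^ 2 ≤ u ^ 4 * (8 * u) ^ 2 := by
        rw [h2]
        have h' : Real.log x ^ 2 ≤ (8 * u) ^ 2 := by nlinarith
        exact mul_le_mul_of_nonneg_left h' (by positivity)
    _ = 64 * u ^ 6 := by ring
    _ ≤ a * u ^ 8 := by
        have : a * (64 / a) ≤ a * u ^ 2 := by
          exact mul_le_mul_of_nonneg_left hu2 ha.le
        rw [mul_div_cancel₀ _ (ne_of_gt ha)] at this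
        have h6 : (0:ℝ) ≤ u ^ 6 := by positivity
        nlinarith [mul_le_mul_of_nonneg_right this h6]
    _ = a * x := by rw [h3]
set_option maxHeartbeats 1600000 in
theorem stmt_11
    (hS : ∃ c C : ℝ, 0 < c ∧ c ≤ C ∧ ∀ᶠ x : ℝ in atTop,
      c * Real.sqrt (x / Real.log x) ≤ S x ∧ S x ≤ C * Real.sqrt (x / Real.log x)) :
    ∃ c C : ℝ, 0 < c ∧ c ≤ C ∧ ∀ᶠ x : ℝ in atTop,
      c * (Nat.primeCounting ⌊x⌋₊ : ℝ) ≤ (S x) ^ 2 - M x ∧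
      (S x) ^ 2 - M x ≤ C * (Nat.primeCounting ⌊x⌋₊ : ℝ) := by
  obtain ⟨c, C, hc, hcC, hev⟩ := hS
  have hC : 0 < C := lt_of_lt_of_le hc hcC
  set K : ℝ := (3 * C / c) ^ 2 with hKdef
  have hK9 : 9 ≤ K := by
    rw [hKdef, div_pow, le_div_iff₀ (by positivity)]
    nlinarith
  have hK0 : 0 < K := by linarith
  refine ⟨c ^ 2 / (2 * C), 6 * C ^ 3 / c ^ 2, by positivity, ?_, ?_⟩
  · rw [div_le_div_iff₀ (by positivity) (by positivity)]
    nlinarith [pow_le_pow_left₀ hc.le hcC 4]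
  have htd : Tendsto (fun x : ℝ => x / K) atTop atTop :=
    tendsto_id.atTop_div_const hK0
  filter_upwards [hev, htd.eventually hev, eventually_ge_atTop (max 8 (K ^ 2)),
    eventually_sqrt_log_sq_le (show (0:ℝ) < c ^ 2 / 8 by positivity)] with x hx hxK hx8' hgl
  have hx8 : (8:ℝ) ≤ x := le_trans (le_max_left _ _) hx8'
  have hxK2 : K ^ 2 ≤ x := le_trans (le_max_right _ _) hx8'
  have hx0 : (0:ℝ) < x := by linarith
  have hx1 : (1:ℝ) ≤ x := by linarith
  have hlx0 : (0:ℝ) < Real.log x := Real.log_pos (by linarith)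
  have hlx1 : (1:ℝ) ≤ Real.log x := by
    rw [show (1:ℝ) = Real.log (Real.exp 1) by rw [Real.log_exp]]
    exact Real.log_le_log (Real.exp_pos 1) (by nlinarith [Real.exp_one_lt_d9])
  set t : ℝ := x / Real.log x with htdef
  have ht0 : (0:ℝ) < t := by positivity
  have hS0 : 0 ≤ S x := le_trans (by positivity) hx.1
  have hSsq_lo : c ^ 2 * t ≤ (S x) ^ 2 := by
    have h := mul_le_mul hx.1 hx.1 (by positivity) hS0
    have : (c * Real.sqrt t) * (c * Real.sqrt t) = c ^ 2 * t := by
      rw [show (c * Real.sqrt t) * (c * Real.sqrt t)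
          = c ^ 2 * (Real.sqrt t * Real.sqrt t) by ring, Real.mul_self_sqrt ht0.le]
    nlinarith [h]
  have hSsq_hi : (S x) ^ 2 ≤ C ^ 2 * t := by
    have h := mul_le_mul hx.2 hx.2 hS0 (by positivity)
    have : (C * Real.sqrt t) * (C * Real.sqrt t) = C ^ 2 * t := by
      rw [show (C * Real.sqrt t) * (C * Real.sqrt t)
          = C ^ 2 * (Real.sqrt t * Real.sqrt t) by ring, Real.mul_self_sqrt ht0.le]
    nlinarith [h]
  set P : Finset ℕ := primesUpTo x with hPdef
  have hπcast : ((Nat.primeCounting ⌊x⌋₊ : ℕ) : ℝ) = (P.card : ℝ) := by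
    rw [primesUpTo_card]
  -- upper bound on π
  have hπ_hi : (P.card : ℝ) ≤ C * t := by
    have key : ∀ p ∈ P, (1:ℝ) ≤ Real.sqrt t * Real.sqrt (Real.log p / p) := by
      intro p hp
      have hpp := prime_of_mem hp
      have hpx := le_of_mem hx0.le hp
      have hld := logdiv_le hx8 hpp hpx
      have h1 : (1:ℝ) ≤ t * (Real.log p / p) := by
        have h2 : t * (Real.log x / x) ≤ t * (Real.log p / p) :=
          mul_le_mul_of_nonneg_left hld ht0.le
        have h3 : t * (Real.log x / x) = 1 := by
          rw [htdef]; field_simp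
        linarith
      rw [← Real.sqrt_mul ht0.le]
      exact Real.one_le_sqrt.2 h1
    calc (P.card : ℝ) = ∑ _p ∈ P, (1:ℝ) := by simp
      _ ≤ ∑ p ∈ P, Real.sqrt t * Real.sqrt (Real.log p / p) := Finset.sum_le_sum key
      _ = Real.sqrt t * S x := by rw [S, Finset.mul_sum]
      _ ≤ Real.sqrt t * (C * Real.sqrt t) :=
          mul_le_mul_of_nonneg_left hx.2 (Real.sqrt_nonneg _)
      _ = C * t := by
          rw [show Real.sqrt t * (C * Real.sqrt t)
            = C * (Real.sqrt t * Real.sqrt t) by ring, Real.mul_self_sqrt ht0.le]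
  -- lower bound on π
  have hπ_lo : c ^ 2 / (6 * C) * t ≤ (P.card : ℝ) := by
    have hxK0 : (0:ℝ) < x / K := by positivity
    have hsub : primesUpTo (x / K) ⊆ P :=
      primesUpTo_mono (by rw [div_le_iff₀ hK0]; nlinarith)
    have hdiff : ∑ p ∈ P \ primesUpTo (x / K), Real.sqrt (Real.log p / p)
        = S x - S (x / K) := by
      rw [S, S, Finset.sum_sdiff_eq_sub hsub]
    -- per-term bound on the difference range
    have hterm : ∀ p ∈ P \ primesUpTo (x / K),
        Real.sqrt (Real.log p / p) ≤ Real.sqrt (K * Real.log x / x) := by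
      intro p hp
      rw [Finset.mem_sdiff] at hp
      have hpp := prime_of_mem hp.1
      have hpx := le_of_mem hx0.le hp.1
      have hplo : x / K < (p : ℝ) := gt_of_notMem hxK0.le hpp hp.2
      apply Real.sqrt_le_sqrt
      have hlog : Real.log p ≤ Real.log x := Real.log_le_log (by exact_mod_cast hpp.pos) hpx
      have : Real.log p / p ≤ Real.log x / (x / K) :=
        div_le_div₀ (by linarith) hlog hxK0 hplo.le
      calc Real.log p / p ≤ Real.log x / (x / K) := this
        _ = K * Real.log x / x := by field_simp
    have hsum_le : S x - S (x / K) ≤ (P.card : ℝ) * Real.sqrt (K * Real.log x / x) := by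
      rw [← hdiff]
      calc ∑ p ∈ P \ primesUpTo (x / K), Real.sqrt (Real.log p / p)
          ≤ ∑ _p ∈ P \ primesUpTo (x / K), Real.sqrt (K * Real.log x / x) :=
            Finset.sum_le_sum hterm
        _ = ((P \ primesUpTo (x / K)).card : ℝ) * Real.sqrt (K * Real.log x / x) := by
            rw [Finset.sum_const, nsmul_eq_mul]
        _ ≤ (P.card : ℝ) * Real.sqrt (K * Real.log x / x) := by
            apply mul_le_mul_of_nonneg_right _ (Real.sqrt_nonneg _)
            exact_mod_cast Finset.card_le_card (Finset.sdiff_subset)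
    -- lower bound on the difference
    have hlogxK : (1/2) * Real.log x ≤ Real.log (x / K) := by
      rw [Real.log_div (ne_of_gt hx0) (ne_of_gt hK0)]
      have h1 : Real.log (K ^ 2) ≤ Real.log x := Real.log_le_log (by positivity) hxK2
      rw [Real.log_pow] at h1
      push_cast at h1
      linarith
    have hSxK : S (x / K) ≤ (c / 2) * Real.sqrt t := by
      have h1 : S (x / K) ≤ C * Real.sqrt ((x / K) / Real.log (x / K)) := hxK.2
      have h2 : Real.sqrt ((x / K) / Real.log (x / K))
          ≤ Real.sqrt ((2 / K) * t) := by
        apply Real.sqrt_le_sqrt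
        have hlK0 : (0:ℝ) < Real.log (x / K) := by linarith
        calc (x / K) / Real.log (x / K) ≤ (x / K) / ((1/2) * Real.log x) :=
              div_le_div_of_nonneg_left hxK0.le (by linarith) hlogxK
          _ = (2 / K) * t := by rw [htdef]; field_simp
      have h3 : Real.sqrt ((2 / K) * t) = Real.sqrt (2 / K) * Real.sqrt t :=
        Real.sqrt_mul (by positivity) _
      have h4 : Real.sqrt (2 / K) = Real.sqrt 2 * (c / (3 * C)) := by
        rw [show (2 : ℝ) / K = 2 * (c / (3 * C)) ^ 2 by rw [hKdef]; field_simp,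
          Real.sqrt_mul (by norm_num), Real.sqrt_sq (by positivity)]
      have h5 : Real.sqrt 2 ≤ 3 / 2 := by
        rw [show (3:ℝ)/2 = Real.sqrt ((3/2)^2) by rw [Real.sqrt_sq]; norm_num]
        exact Real.sqrt_le_sqrt (by norm_num)
      have h6 : C * (Real.sqrt 2 * (c / (3 * C))) ≤ c / 2 := by
        rw [show C * (Real.sqrt 2 * (c / (3 * C))) = Real.sqrt 2 * (c / 3) by field_simp]
        nlinarith
      calc S (x / K) ≤ C * Real.sqrt ((x / K) / Real.log (x / K)) := h1
        _ ≤ C * (Real.sqrt 2 * (c / (3 * C)) * Real.sqrt t) := by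
            rw [h3, h4] at h2
            exact mul_le_mul_of_nonneg_left h2 hC.le
        _ ≤ (c / 2) * Real.sqrt t := by
            have := mul_le_mul_of_nonneg_right h6 (Real.sqrt_nonneg t)
            linarith [this]
    have hmain : (c / 2) * Real.sqrt t ≤ (P.card : ℝ) * Real.sqrt (K * Real.log x / x) := by
      have := hx.1
      linarith [hsum_le]
    -- convert to π ≥ c²/(6C) t
    have hr : Real.sqrt (K * Real.log x / x) = (3 * C / c) * Real.sqrt (Real.log x / x) := by
      rw [show K * Real.log x / x = K * (Real.log x / x) by ring,
        Real.sqrt_mul hK0.le, hKdef, Real.sqrt_sq (by positivity)]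
    have hone : Real.sqrt (Real.log x / x) * Real.sqrt t = 1 := by
      rw [← Real.sqrt_mul (by positivity), show Real.log x / x * t = 1 by
        rw [htdef]; field_simp]
      exact Real.sqrt_one
    have h7 := mul_le_mul_of_nonneg_right hmain (Real.sqrt_nonneg t)
    have h8 : (c / 2) * Real.sqrt t * Real.sqrt t = (c / 2) * t := by
      rw [show (c / 2) * Real.sqrt t * Real.sqrt t
        = (c / 2) * (Real.sqrt t * Real.sqrt t) by ring, Real.mul_self_sqrt ht0.le]
    have h9 : (P.card : ℝ) * Real.sqrt (K * Real.log x / x) * Real.sqrt t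
        = (3 * C / c) * (P.card : ℝ) := by
      rw [hr]
      rw [show (P.card : ℝ) * ((3 * C / c) * Real.sqrt (Real.log x / x)) * Real.sqrt t
        = (3 * C / c) * (P.card : ℝ) * (Real.sqrt (Real.log x / x) * Real.sqrt t) by ring,
        hone, mul_one]
    have h10 : (c / 2) * t ≤ (3 * C / c) * (P.card : ℝ) := by
      rw [← h8, ← h9]; exact h7
    have h11 := mul_le_mul_of_nonneg_left h10 (show (0:ℝ) ≤ c / (3 * C) by positivity)
    calc c ^ 2 / (6 * C) * t = c / (3 * C) * ((c / 2) * t) := by field_simp; ring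
      _ ≤ c / (3 * C) * ((3 * C / c) * (P.card : ℝ)) := h11
      _ = (P.card : ℝ) := by field_simp
  -- M bounds
  have hM0 : 0 ≤ M x := by
    apply Finset.sum_nonneg
    intro p hp
    have hpp := prime_of_mem hp
    have : (1:ℝ) ≤ (p:ℝ) := by exact_mod_cast hpp.one_lt.le
    exact div_nonneg (Real.log_nonneg this) (by linarith)
  have hM_hi : M x ≤ c ^ 2 / 2 * t := by
    have hsx0 : (0:ℝ) < Real.sqrt x := Real.sqrt_pos.2 hx0
    have hsx1 : (1:ℝ) ≤ Real.sqrt x := Real.one_le_sqrt.2 hx1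
    have hsub2 : primesUpTo (Real.sqrt x) ⊆ P :=
      primesUpTo_mono (by nlinarith [Real.sq_sqrt hx0.le, hsx1])
    have hsplit : M x = (∑ p ∈ P \ primesUpTo (Real.sqrt x), Real.log p / p)
        + ∑ p ∈ primesUpTo (Real.sqrt x), Real.log p / p := by
      rw [M, ← Finset.sum_sdiff hsub2]
    have hb1 : ∑ p ∈ primesUpTo (Real.sqrt x), Real.log p / p ≤ Real.sqrt x + 1 := by
      calc ∑ p ∈ primesUpTo (Real.sqrt x), Real.log p / p
          ≤ ∑ _p ∈ primesUpTo (Real.sqrt x), (1:ℝ) := by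
            apply Finset.sum_le_sum
            intro p hp
            have hpp := prime_of_mem hp
            have hp0 : (0:ℝ) < (p:ℝ) := by exact_mod_cast hpp.pos
            rw [div_le_one hp0]
            linarith [Real.log_le_sub_one_of_pos hp0]
        _ = ((primesUpTo (Real.sqrt x)).card : ℝ) := by simp
        _ ≤ ((⌊Real.sqrt x⌋₊ + 1 : ℕ) : ℝ) := by
            exact_mod_cast le_trans (Finset.card_le_card (Finset.filter_subset _ _))
              (le_of_eq (Finset.card_range _))
        _ ≤ Real.sqrt x + 1 := by
            push_cast
            linarith [Nat.floor_le (Real.sqrt_nonneg x)]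
    have hb2 : ∑ p ∈ P \ primesUpTo (Real.sqrt x), Real.log p / p
        ≤ (x + 1) * (Real.log x / Real.sqrt x) := by
      calc ∑ p ∈ P \ primesUpTo (Real.sqrt x), Real.log p / p
          ≤ ∑ _p ∈ P \ primesUpTo (Real.sqrt x), Real.log x / Real.sqrt x := by
            apply Finset.sum_le_sum
            intro p hp
            rw [Finset.mem_sdiff] at hp
            have hpp := prime_of_mem hp.1
            have hpx := le_of_mem hx0.le hp.1
            have hplo : Real.sqrt x < (p:ℝ) :=
              gt_of_notMem (Real.sqrt_nonneg x) hpp hp.2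
            have hlog : Real.log p ≤ Real.log x :=
              Real.log_le_log (by exact_mod_cast hpp.pos) hpx
            exact div_le_div₀ hlx0.le hlog hsx0 hplo.le
        _ = (((P \ primesUpTo (Real.sqrt x)).card : ℕ) : ℝ) * (Real.log x / Real.sqrt x) := by
            rw [Finset.sum_const, nsmul_eq_mul]
        _ ≤ (x + 1) * (Real.log x / Real.sqrt x) := by
            apply mul_le_mul_of_nonneg_right _ (by positivity)
            have hc1 : (P \ primesUpTo (Real.sqrt x)).card ≤ ⌊x⌋₊ + 1 :=
              le_trans (Finset.card_le_card Finset.sdiff_subset)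
                (le_trans (Finset.card_le_card (Finset.filter_subset _ _))
                  (le_of_eq (Finset.card_range _)))
            have hc2 : ((⌊x⌋₊ : ℕ) : ℝ) ≤ x := Nat.floor_le hx0.le
            calc ((P \ primesUpTo (Real.sqrt x)).card : ℝ)
                ≤ ((⌊x⌋₊ + 1 : ℕ) : ℝ) := by exact_mod_cast hc1
              _ ≤ x + 1 := by push_cast; linarith
    have hM4 : M x ≤ 4 * Real.sqrt x * Real.log x := by
      have e1 : Real.sqrt x + 1 ≤ 2 * Real.sqrt x * Real.log x := by nlinarith
      have e2 : (x + 1) * (Real.log x / Real.sqrt x) ≤ 2 * Real.sqrt x * Real.log x := by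
        have hds : x / Real.sqrt x = Real.sqrt x := Real.div_sqrt
        have : (x + 1) / Real.sqrt x ≤ 2 * Real.sqrt x := by
          rw [div_le_iff₀ hsx0]
          nlinarith [Real.sq_sqrt hx0.le]
        calc (x + 1) * (Real.log x / Real.sqrt x) = ((x + 1) / Real.sqrt x) * Real.log x := by
              ring
          _ ≤ 2 * Real.sqrt x * Real.log x :=
              mul_le_mul_of_nonneg_right this hlx0.le
      linarith [hsplit, hb1, hb2]
    have : 4 * Real.sqrt x * Real.log x ≤ c ^ 2 / 2 * t := by
      rw [htdef, show c ^ 2 / 2 * (x / Real.log x) = c ^ 2 / 2 * x / Real.log x by ring,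
        le_div_iff₀ hlx0]
      nlinarith [hgl]
    linarith
  -- conclude
  rw [hπcast]
  constructor
  · have e1 : c ^ 2 / (2 * C) * (P.card : ℝ) ≤ c ^ 2 / (2 * C) * (C * t) :=
      mul_le_mul_of_nonneg_left hπ_hi (by positivity)
    have e2 : c ^ 2 / (2 * C) * (C * t) = c ^ 2 / 2 * t := by field_simp
    linarith
  · have e1 : 6 * C ^ 3 / c ^ 2 * (c ^ 2 / (6 * C) * t) ≤ 6 * C ^ 3 / c ^ 2 * (P.card : ℝ) :=
      mul_le_mul_of_nonneg_left hπ_lo (by positivity)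
    have e2 : 6 * C ^ 3 / c ^ 2 * (c ^ 2 / (6 * C) * t) = C ^ 2 * t := by field_simp
    linarith
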